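/- Let d ≥ 1, κ ≥ 2d, and let α₁, α₂ : ℝ^{2d} → ℂ be measurable with ‖α_i‖_{A^{κ,2}} < ∞, and let ρ_i(x) := ∫_{ℝ^d} |α_i(x,v)|² dv. Then sup_{x ∈ ℝ^d} |ρ₁(x) − ρ₂(x)| ≤ A(κ,d) (‖α₁‖_{A^{κ,2}} + ‖α₂‖_{A^{κ,2}}) ‖α₁ − α₂‖_{A^{κ,2}}, where A(κ,d) := inf_{R>0} (1+R)^κ/(ω_d R^d) and ω_d is the Lebesgue volume of the unit ball in ℝ^d. -/

import Mathlib

open MeasureTheory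
open scoped ENNReal NNReal

/-- `ℝ^d` as a Euclidean space. -/
abbrev E (d : ℕ) : Type := EuclideanSpace ℝ (Fin d)

/-- The `A^{κ,p}` norm: `sup_{R ≥ 0} (1+R)^{-κ/p} (∫ sup_{|z̄| ≤ R} ‖f(z+z̄)‖^p dz)^{1/p}`. -/
noncomputable def Anorm {G F : Type*} [NormedAddCommGroup G] [MeasureSpace G]
    [NormedAddCommGroup F] (κ p : ℝ) (f : G → F) : ℝ≥0∞ :=
  ⨆ R : NNReal, (ENNReal.ofReal (1 + (R : ℝ))) ^ (-(κ / p)) *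
    (∫⁻ z, ⨆ w ∈ Metric.closedBall (0 : G) (R : ℝ),
      ENNReal.ofReal (‖f (z + w)‖ ^ p)) ^ (1 / p)

/-- The constant `A(a,d) = inf_{R>0} (1+R)^a / (ω_d R^d)`, where `ω_d` is the Lebesgue
volume of the unit ball in `ℝ^d`. -/
noncomputable def Aconst (d : ℕ) (a : ℝ) : ℝ :=
  ⨅ R : {R : ℝ // 0 < R},
    (1 + R.1) ^ a / ((volume (Metric.ball (0 : E d) 1)).toReal * R.1 ^ (d : ℝ))

/-!
Restricting to the slice `{x} × ℝ^d` costs a factor `vol(B_R)`: shifting by `(x - y, 0)` with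
`|x - y| ≤ R` shows `vol(B_R(x)) ∫ |α(x,v)|² dv ≤ ∫ sup_{|z̄| ≤ R} |α(z + z̄)|² dz
≤ (1 + R)^κ ‖α‖²_{A^{κ,2}}`. So every slice is in `L²` with norm at most
`((1 + R)^κ / (ω_d R^d))^{1/2} ‖α‖_{A^{κ,2}}`, and the claim follows from
`|‖f‖₂² - ‖g‖₂²| ≤ ‖f - g‖₂ (‖f‖₂ + ‖g‖₂)` (Cauchy–Schwarz) by optimizing in `R`.
-/

theorem ofReal_abs_integral_norm_sq_sub_le {X F : Type*} [MeasurableSpace X] {μ : Measure X}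
    [NormedAddCommGroup F] {f g : X → F} (hf : MemLp f 2 μ) (hg : MemLp g 2 μ) :
    ENNReal.ofReal |∫ x, ‖f x‖ ^ 2 ∂μ - ∫ x, ‖g x‖ ^ 2 ∂μ| ≤
      eLpNorm (f - g) 2 μ * (eLpNorm f 2 μ + eLpNorm g 2 μ) := by
  have hsq : ∀ x, ‖‖f x‖ ^ 2 - ‖g x‖ ^ 2‖ ≤ ‖‖(f - g) x‖ * (‖f x‖ + ‖g x‖)‖ := fun x => by
    rw [sq_sub_sq, norm_mul, norm_mul, norm_norm,
      Real.norm_of_nonneg (by positivity : 0 ≤ ‖f x‖ + ‖g x‖), mul_comm]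
    exact mul_le_mul_of_nonneg_right (abs_norm_sub_norm_le _ _) (by positivity)
  calc ENNReal.ofReal |∫ x, ‖f x‖ ^ 2 ∂μ - ∫ x, ‖g x‖ ^ 2 ∂μ|
      = ‖∫ x, (‖f x‖ ^ 2 - ‖g x‖ ^ 2) ∂μ‖ₑ := by
        rw [integral_sub (hf.integrable_norm_pow two_ne_zero) (hg.integrable_norm_pow two_ne_zero),
          Real.enorm_eq_ofReal_abs]
    _ ≤ eLpNorm (fun x => ‖f x‖ ^ 2 - ‖g x‖ ^ 2) 1 μ :=
        (enorm_integral_le_lintegral_enorm _).trans_eq eLpNorm_one_eq_lintegral_enorm.symm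
    _ ≤ eLpNorm (fun x => ‖(f - g) x‖ * (‖f x‖ + ‖g x‖)) 1 μ := eLpNorm_mono hsq
    _ ≤ eLpNorm (f - g) 2 μ * eLpNorm (fun x => ‖f x‖ + ‖g x‖) 2 μ := by
        simpa using eLpNorm_le_eLpNorm_mul_eLpNorm'_of_norm (hf.1.sub hg.1)
          (hf.1.norm.add hg.1.norm) (fun a r => ‖a‖ * r) 1
          (ae_of_all _ fun x => by simp [norm_mul]) (g := fun x => ‖f x‖ + ‖g x‖)
    _ ≤ eLpNorm (f - g) 2 μ * (eLpNorm f 2 μ + eLpNorm g 2 μ) := by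
        gcongr
        rw [← eLpNorm_norm f, ← eLpNorm_norm g]
        exact eLpNorm_add_le hf.1.norm hg.1.norm one_le_two

theorem lintegral_iSup_closedBall_le_Anorm {G F : Type*} [NormedAddCommGroup G] [MeasureSpace G]
    [NormedAddCommGroup F] (κ : ℝ) {p : ℝ} (hp : 0 < p) (f : G → F) (R : ℝ≥0) :
    ∫⁻ z, ⨆ w ∈ Metric.closedBall (0 : G) R, ENNReal.ofReal (‖f (z + w)‖ ^ p) ≤
      ENNReal.ofReal (1 + R) ^ κ * Anorm κ p f ^ p := by
  set S := ∫⁻ z, ⨆ w ∈ Metric.closedBall (0 : G) R, ENNReal.ofReal (‖f (z + w)‖ ^ p)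
  set b := ENNReal.ofReal (1 + R)
  have hb0 : b ≠ 0 := by simp only [b, ne_eq, ENNReal.ofReal_eq_zero, not_le]; positivity
  have hbt : b ≠ ⊤ := ENNReal.ofReal_ne_top
  have hterm : b ^ (-(κ / p)) * S ^ (1 / p) ≤ Anorm κ p f :=
    le_iSup (fun R : ℝ≥0 => ENNReal.ofReal (1 + R) ^ (-(κ / p)) *
      (∫⁻ z, ⨆ w ∈ Metric.closedBall (0 : G) R, ENNReal.ofReal (‖f (z + w)‖ ^ p)) ^ (1 / p)) R
  have hroot : S ^ (1 / p) ≤ b ^ (κ / p) * Anorm κ p f := by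
    calc S ^ (1 / p) = b ^ (κ / p) * (b ^ (-(κ / p)) * S ^ (1 / p)) := by
          rw [← mul_assoc, ← ENNReal.rpow_add _ _ hb0 hbt, add_neg_cancel, ENNReal.rpow_zero,
            one_mul]
      _ ≤ b ^ (κ / p) * Anorm κ p f := by gcongr
  calc S = (S ^ (1 / p)) ^ p := by
        rw [← ENNReal.rpow_mul, one_div_mul_cancel hp.ne', ENNReal.rpow_one]
    _ ≤ (b ^ (κ / p) * Anorm κ p f) ^ p := by gcongr
    _ = b ^ κ * Anorm κ p f ^ p := by
      rw [ENNReal.mul_rpow_of_nonneg _ _ hp.le, ← ENNReal.rpow_mul, div_mul_cancel₀ _ hp.ne']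

theorem volume_closedBall_mul_lintegral_slice_le {G H F : Type*} [NormedAddCommGroup G]
    [MeasureSpace G] [OpensMeasurableSpace G] [NormedAddCommGroup H] [MeasureSpace H]
    [SFinite (volume : Measure H)] [NormedAddCommGroup F] {α : G × H → F}
    (hα : StronglyMeasurable α) (p : ℝ) (x : G) {R : ℝ} (hR : 0 ≤ R) :
    volume (Metric.closedBall x R) * ∫⁻ v, ENNReal.ofReal (‖α (x, v)‖ ^ p) ≤
      ∫⁻ z, ⨆ w ∈ Metric.closedBall (0 : G × H) R, ENNReal.ofReal (‖α (z + w)‖ ^ p) := by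
  have hslice : Measurable fun v => ENNReal.ofReal (‖α (x, v)‖ ^ p) :=
    ((hα.comp_measurable measurable_prodMk_left).norm.measurable.pow_const p).ennreal_ofReal
  rw [← lintegral_indicator_one measurableSet_closedBall, ← lintegral_prod_mul
    (measurable_one.indicator measurableSet_closedBall).aemeasurable hslice.aemeasurable,
    ← Measure.volume_eq_prod]
  refine lintegral_mono fun z => ?_
  by_cases hz : z.1 ∈ Metric.closedBall x R
  · have hw : ((x - z.1, 0) : G × H) ∈ Metric.closedBall 0 R := by
      rw [mem_closedBall_zero_iff, Prod.norm_def, norm_zero, max_le_iff, ← dist_eq_norm,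
        dist_comm]
      exact ⟨hz, hR⟩
    have hzw : z + (x - z.1, 0) = (x, z.2) := by ext <;> simp
    rw [Set.indicator_of_mem hz, Pi.one_apply, one_mul, ← hzw]
    exact le_biSup (fun w => ENNReal.ofReal (‖α (z + w)‖ ^ p)) hw
  · simp [Set.indicator_of_notMem hz]

theorem toReal_volume_ball_pos (d : ℕ) : 0 < (volume (Metric.ball (0 : E d) 1)).toReal :=
  ENNReal.toReal_pos (Metric.measure_ball_pos volume _ one_pos).ne' measure_ball_lt_top.ne

theorem ofReal_div_volume_ball_mul_rpow {d : ℕ} (κ : ℝ) {R : ℝ} (hR : 0 < R) (x : E d) :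
    ENNReal.ofReal ((1 + R) ^ κ / ((volume (Metric.ball (0 : E d) 1)).toReal * R ^ (d : ℝ))) =
      ENNReal.ofReal (1 + R) ^ κ / volume (Metric.closedBall x R) := by
  have hV : volume (Metric.ball (0 : E d) 1) ≠ ⊤ := measure_ball_lt_top.ne
  have hV0 := toReal_volume_ball_pos d
  rw [Measure.addHaar_closedBall volume x hR.le, finrank_euclideanSpace_fin,
    ENNReal.ofReal_div_of_pos (by positivity), ENNReal.ofReal_mul hV0.le, ENNReal.ofReal_toReal hV,
    ENNReal.ofReal_rpow_of_pos (by positivity), Real.rpow_natCast, mul_comm]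

theorem lintegral_slice_le {d : ℕ} {H F : Type*} [NormedAddCommGroup H] [MeasureSpace H]
    [SFinite (volume : Measure H)] [NormedAddCommGroup F] {α : E d × H → F}
    (hα : StronglyMeasurable α) (κ : ℝ) {p : ℝ} (hp : 0 < p) (x : E d) {R : ℝ} (hR : 0 < R) :
    ∫⁻ v, ENNReal.ofReal (‖α (x, v)‖ ^ p) ≤
      ENNReal.ofReal ((1 + R) ^ κ / ((volume (Metric.ball (0 : E d) 1)).toReal * R ^ (d : ℝ))) *
        Anorm κ p α ^ p := by
  rw [ofReal_div_volume_ball_mul_rpow κ hR x, ← ENNReal.mul_div_right_comm,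
    ENNReal.le_div_iff_mul_le (.inl (Metric.measure_closedBall_pos volume x hR).ne')
      (.inl measure_closedBall_lt_top.ne), mul_comm]
  have := lintegral_iSup_closedBall_le_Anorm κ hp α R.toNNReal
  rw [Real.coe_toNNReal R hR.le] at this
  exact (volume_closedBall_mul_lintegral_slice_le hα p x hR.le).trans this

theorem eLpNorm_slice_le {d : ℕ} {H F : Type*} [NormedAddCommGroup H] [MeasureSpace H]
    [SFinite (volume : Measure H)] [NormedAddCommGroup F] {α : E d × H → F}
    (hα : StronglyMeasurable α) (κ : ℝ) {p : ℝ} (hp : 0 < p) (x : E d) {R : ℝ} (hR : 0 < R) :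
    eLpNorm (fun v => α (x, v)) (ENNReal.ofReal p) ≤
      ENNReal.ofReal ((1 + R) ^ κ / ((volume (Metric.ball (0 : E d) 1)).toReal * R ^ (d : ℝ))) ^
        (1 / p) * Anorm κ p α := by
  rw [eLpNorm_eq_lintegral_rpow_enorm_toReal (by simpa using hp) ENNReal.ofReal_ne_top,
    ENNReal.toReal_ofReal hp.le]
  simp_rw [← ofReal_norm, ENNReal.ofReal_rpow_of_nonneg (norm_nonneg _) hp.le]
  calc (∫⁻ v, ENNReal.ofReal (‖α (x, v)‖ ^ p)) ^ (1 / p)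
      ≤ (ENNReal.ofReal ((1 + R) ^ κ / ((volume (Metric.ball (0 : E d) 1)).toReal *
          R ^ (d : ℝ))) * Anorm κ p α ^ p) ^ (1 / p) := by
        gcongr
        exact lintegral_slice_le hα κ hp x hR
    _ = _ := by
        rw [ENNReal.mul_rpow_of_nonneg _ _ (by positivity), ← ENNReal.rpow_mul,
          mul_one_div_cancel hp.ne', ENNReal.rpow_one]

theorem memLp_slice {d : ℕ} {H F : Type*} [NormedAddCommGroup H] [MeasureSpace H]
    [SFinite (volume : Measure H)] [NormedAddCommGroup F] {α : E d × H → F}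
    (hα : StronglyMeasurable α) {κ p : ℝ} (hp : 0 < p) (hfin : Anorm κ p α < ⊤) (x : E d) :
    MemLp (fun v => α (x, v)) (ENNReal.ofReal p) :=
  ⟨(hα.comp_measurable measurable_prodMk_left).aestronglyMeasurable,
    (eLpNorm_slice_le hα κ hp x one_pos).trans_lt
      (ENNReal.mul_lt_top (ENNReal.rpow_lt_top_of_nonneg (by positivity) ENNReal.ofReal_ne_top)
        hfin)⟩

theorem inv_toReal_volume_ball_le_Aconst {d : ℕ} {κ : ℝ} (hκ : (d : ℝ) ≤ κ) :
    (volume (Metric.ball (0 : E d) 1)).toReal⁻¹ ≤ Aconst d κ := by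
  have hV0 := toReal_volume_ball_pos d
  refine le_ciInf fun ⟨R, hR⟩ => ?_
  rw [inv_eq_one_div, div_le_div_iff₀ hV0 (by positivity), one_mul, mul_comm]
  gcongr
  calc R ^ (d : ℝ) ≤ (1 + R) ^ (d : ℝ) := by gcongr; linarith
    _ ≤ (1 + R) ^ κ := Real.rpow_le_rpow_of_exponent_le (by linarith) hκ

theorem le_ofReal_Aconst_mul {d : ℕ} {κ : ℝ} (hκ : (d : ℝ) ≤ κ) {a M : ℝ≥0∞}
    (h : ∀ R : ℝ, 0 < R → a ≤ ENNReal.ofReal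
      ((1 + R) ^ κ / ((volume (Metric.ball (0 : E d) 1)).toReal * R ^ (d : ℝ))) * M) :
    a ≤ ENNReal.ofReal (Aconst d κ) * M := by
  have : Nonempty {R : ℝ // 0 < R} := ⟨⟨1, one_pos⟩⟩
  rw [Aconst, ENNReal.ofReal_iInf, ENNReal.iInf_mul]
  · exact le_iInf fun R => h R.1 R.2
  -- `⨅` commutes with `· * ⊤` only because the infimum is positive.
  · intro _ hzero
    refine absurd hzero (ne_of_gt ?_)
    rw [← ENNReal.ofReal_iInf]
    refine ENNReal.ofReal_pos.2 (lt_of_lt_of_le ?_ (inv_toReal_volume_ball_le_Aconst hκ))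
    exact inv_pos.2 (toReal_volume_ball_pos d)

theorem statement12_general (d : ℕ) (κ : ℝ) (hκ : 2 * (d : ℝ) ≤ κ)
    (α₁ α₂ : E d × E d → ℂ) (hm₁ : Measurable α₁) (hm₂ : Measurable α₂)
    (hf₁ : Anorm κ 2 α₁ < ⊤) (hf₂ : Anorm κ 2 α₂ < ⊤) (x : E d) :
    ENNReal.ofReal |(∫ v : E d, ‖α₁ (x, v)‖ ^ 2) - ∫ v : E d, ‖α₂ (x, v)‖ ^ 2| ≤
      ENNReal.ofReal (Aconst d κ) * (Anorm κ 2 α₁ + Anorm κ 2 α₂) *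
        Anorm κ 2 (α₁ - α₂) := by
  have hs₁ := hm₁.stronglyMeasurable
  have hs₂ := hm₂.stronglyMeasurable
  have hmem {α : E d × E d → ℂ} (hs : StronglyMeasurable α) (hf : Anorm κ 2 α < ⊤) :
      MemLp (fun v => α (x, v)) 2 := by
    have := memLp_slice hs two_pos hf x
    rwa [ENNReal.ofReal_ofNat] at this
  rw [mul_assoc, mul_comm (_ + _)]
  refine le_ofReal_Aconst_mul (by linarith [(d.cast_nonneg : (0 : ℝ) ≤ d)]) fun R hR => ?_
  set c := ENNReal.ofReal
    ((1 + R) ^ κ / ((volume (Metric.ball (0 : E d) 1)).toReal * R ^ (d : ℝ)))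
  have hslice {α : E d × E d → ℂ} (hs : StronglyMeasurable α) :
      eLpNorm (fun v => α (x, v)) 2 ≤ c ^ (1 / 2 : ℝ) * Anorm κ 2 α := by
    have := eLpNorm_slice_le hs κ two_pos x hR
    rwa [ENNReal.ofReal_ofNat] at this
  have hsub : (fun v => α₁ (x, v)) - (fun v => α₂ (x, v)) = fun v => (α₁ - α₂) (x, v) := rfl
  calc _ ≤ eLpNorm (fun v => (α₁ - α₂) (x, v)) 2 *
          (eLpNorm (fun v => α₁ (x, v)) 2 + eLpNorm (fun v => α₂ (x, v)) 2) := by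
        rw [← hsub]
        exact ofReal_abs_integral_norm_sq_sub_le (hmem hs₁ hf₁) (hmem hs₂ hf₂)
    _ ≤ c ^ (1 / 2 : ℝ) * Anorm κ 2 (α₁ - α₂) *
          (c ^ (1 / 2 : ℝ) * Anorm κ 2 α₁ + c ^ (1 / 2 : ℝ) * Anorm κ 2 α₂) := by
        exact mul_le_mul' (hslice (hs₁.sub hs₂)) (add_le_add (hslice hs₁) (hslice hs₂))
    _ = (c ^ (1 / 2 : ℝ) * c ^ (1 / 2 : ℝ)) *
          (Anorm κ 2 (α₁ - α₂) * (Anorm κ 2 α₁ + Anorm κ 2 α₂)) := by ring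
    _ = c * (Anorm κ 2 (α₁ - α₂) * (Anorm κ 2 α₁ + Anorm κ 2 α₂)) := by
        rw [← ENNReal.rpow_add_of_nonneg _ _ (by norm_num) (by norm_num)]
        norm_num

/-- Pointwise Lipschitz estimate for the density:
`|ρ₁(x) − ρ₂(x)| ≤ A(κ,d)(‖α₁‖_{A^{κ,2}} + ‖α₂‖_{A^{κ,2}}) ‖α₁ − α₂‖_{A^{κ,2}}`. -/
theorem statement12 (d : ℕ) (hd : 1 ≤ d) (κ : ℝ) (hκ : 2 * (d : ℝ) ≤ κ)
    (α₁ α₂ : E d × E d → ℂ) (hm₁ : Measurable α₁) (hm₂ : Measurable α₂)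
    (hf₁ : Anorm κ 2 α₁ < ⊤) (hf₂ : Anorm κ 2 α₂ < ⊤) (x : E d) :
    ENNReal.ofReal |(∫ v : E d, ‖α₁ (x, v)‖ ^ 2) - ∫ v : E d, ‖α₂ (x, v)‖ ^ 2| ≤
      ENNReal.ofReal (Aconst d κ) * (Anorm κ 2 α₁ + Anorm κ 2 α₂) *
        Anorm κ 2 (α₁ - α₂) :=
  statement12_general d κ hκ α₁ α₂ hm₁ hm₂ hf₁ hf₂ x
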